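/- Fix r ≥ 1, reals α_1,…,α_r > -1, and positive reals q_1,…,q_r with q_1+···+q_r = 1. Define G_n(x) = ₍r₎F_r(α_1+⌊q_1n⌋+1,…,α_r+⌊q_rn⌋+1; α_1+1,…,α_r+1; -x). Then lim_{n→∞} G_n(z/n^r) = ₀F_r(-; α_1+1,…,α_r+1; -q_1···q_r z) uniformly on compact subsets of ℂ. -/

import Mathlib

open Filter

/-- Rising factorial (Pochhammer symbol). -/
noncomputable def poch (a : ℝ) (m : ℕ) : ℝ := ∏ i ∈ Finset.range m, (a + i)

/-!
Both series are power series in `-z`. With `a_j = α_j + 1`, the `k`-th coefficient of `G_n(z/n^r)`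
is `∏_j (a_j + ⌊q_j n⌋)_k / (n^k (a_j)_k) / k!`; each of the `k` factors of `(a_j + ⌊q_j n⌋)_k`
grows like `q_j n`, so the coefficient tends to `∏_j q_j^k / (a_j)_k / k!`, the coefficient of the
limit. The termwise estimate `|a + m + i| ≤ (1 + |m|/a)(a + i)` and `|⌊q n⌋| ≤ (|q| + 1) n` bound
the coefficients by `(∏_j (1 + (|q_j| + 1) / a_j))^k / k!` uniformly in `n ≥ 1`, so dominated
convergence for series (Tannery's theorem) gives the limit uniformly on every disc.
-/

open Topology

open Metric in
theorem tendstoUniformlyOn_tsum_mul_pow {ι 𝕜 : Type*} [NormedField 𝕜] [CompleteSpace 𝕜]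
    {l : Filter ι} {a : ι → ℕ → 𝕜} {b : ℕ → 𝕜} {M : ℕ → ℝ} {R : ℝ}
    (hab : ∀ k, Tendsto (a · k) l (𝓝 (b k))) (ha : ∀ᶠ i in l, ∀ k, ‖a i k‖ ≤ M k)
    (hM : Summable fun k => M k * R ^ k) :
    TendstoUniformlyOn (fun i z => ∑' k, a i k * z ^ k) (fun z => ∑' k, b k * z ^ k) l
      (closedBall 0 R) := by
  rcases l.eq_or_neBot with rfl | _
  · exact fun _ _ => Filter.eventually_bot
  rcases lt_or_ge R 0 with hR | hR
  · rw [closedBall_eq_empty.2 hR]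
    exact tendstoUniformlyOn_empty
  have hb : ∀ k, ‖b k‖ ≤ M k := fun k =>
    le_of_tendsto (hab k).norm (ha.mono fun i hi => hi k)
  have hdiff : ∀ᶠ i in l, ∀ k, ‖‖b k - a i k‖ * R ^ k‖ ≤ 2 * (M k * R ^ k) := by
    filter_upwards [ha] with i hi k
    rw [norm_mul, norm_norm, norm_pow, Real.norm_of_nonneg hR, two_mul, ← add_mul]
    gcongr
    exact (norm_sub_le _ _).trans (add_le_add (hb k) (hi k))
  have hlim : Tendsto (fun i => ∑' k, ‖b k - a i k‖ * R ^ k) l (𝓝 0) := by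
    have hterm : ∀ k, Tendsto (fun i => ‖b k - a i k‖ * R ^ k) l (𝓝 0) := fun k => by
      simpa using ((hab k).const_sub (b k)).norm.mul_const (R ^ k)
    simpa only [tsum_zero] using
      tendsto_tsum_of_dominated_convergence (hM.mul_left 2) hterm hdiff
  have hsum : ∀ c : ℕ → 𝕜, (∀ k, ‖c k‖ ≤ M k) → ∀ z ∈ closedBall (0 : 𝕜) R,
      Summable fun k => c k * z ^ k := by
    intro c hc z hz
    refine hM.of_norm_bounded fun k => ?_
    rw [norm_mul, norm_pow]
    exact mul_le_mul (hc k) (pow_le_pow_left₀ (norm_nonneg z) (mem_closedBall_zero_iff.1 hz) k)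
      (by positivity) ((norm_nonneg _).trans (hb k))
  rw [Metric.tendstoUniformlyOn_iff]
  intro ε hε
  filter_upwards [hlim.eventually_lt_const hε, ha, hdiff] with i hi hai hdi z hz
  have hdom : ∀ k, ‖(b k - a i k) * z ^ k‖ ≤ ‖b k - a i k‖ * R ^ k := fun k => by
    rw [norm_mul, norm_pow]
    gcongr
    exact mem_closedBall_zero_iff.1 hz
  have hRsum : Summable fun k => ‖b k - a i k‖ * R ^ k :=
    (hM.mul_left 2).of_norm_bounded hdi
  calc dist (∑' k, b k * z ^ k) (∑' k, a i k * z ^ k)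
      = ‖∑' k, (b k - a i k) * z ^ k‖ := by
        rw [dist_eq_norm, ← (hsum b hb z hz).tsum_sub (hsum _ hai z hz)]
        simp only [sub_mul]
    _ ≤ ∑' k, ‖b k - a i k‖ * R ^ k :=
        tsum_of_norm_bounded hRsum.hasSum hdom
    _ < ε := hi

lemma poch_pos {a : ℝ} (ha : 0 < a) (k : ℕ) : 0 < poch a k :=
  Finset.prod_pos fun i _ => by positivity

lemma abs_poch_add_le {a : ℝ} (ha : 0 < a) (m : ℝ) (k : ℕ) :
    |poch (a + m) k| ≤ (1 + |m| / a) ^ k * poch a k := by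
  have hpow : (1 + |m| / a) ^ k * poch a k = ∏ i ∈ Finset.range k, (1 + |m| / a) * (a + i) := by
    rw [Finset.prod_mul_distrib, Finset.prod_const, Finset.card_range, poch]
  rw [hpow, poch, Finset.abs_prod]
  refine Finset.prod_le_prod (fun _ _ => abs_nonneg _) fun i _ => ?_
  have hai : a ≤ a + i := le_add_of_nonneg_right i.cast_nonneg
  calc |a + m + i| ≤ |a + i| + |m| := by rw [add_right_comm]; exact abs_add_le _ _
    _ = (a + i) + |m| / a * a := by rw [abs_of_pos (by positivity), div_mul_cancel₀ _ ha.ne']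
    _ ≤ (a + i) + |m| / a * (a + i) := by gcongr
    _ = (1 + |m| / a) * (a + i) := by ring

lemma abs_floor_mul_natCast_le (q : ℝ) (n : ℕ) : |(⌊q * n⌋ : ℝ)| ≤ (|q| + 1) * n := by
  rcases n.eq_zero_or_pos with rfl | hn
  · simp
  have hn : (1 : ℝ) ≤ n := by exact_mod_cast hn
  have hqn : |q * n| = |q| * n := by rw [abs_mul, Nat.abs_cast]
  rw [abs_le]
  constructor <;> linarith [Int.floor_le (q * n), Int.lt_floor_add_one (q * n),
    neg_abs_le (q * n), le_abs_self (q * n)]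

lemma tendsto_add_floor_mul_div (c q : ℝ) :
    Tendsto (fun n : ℕ => (c + ⌊q * n⌋) / n) atTop (𝓝 q) := by
  have hlow : Tendsto (fun n : ℕ => q - 1 / (n : ℝ)) atTop (𝓝 q) := by
    simpa using tendsto_const_nhds.sub (tendsto_one_div_atTop_nhds_zero_nat (𝕜 := ℝ))
  have hfloor : Tendsto (fun n : ℕ => (⌊q * n⌋ : ℝ) / n) atTop (𝓝 q) := by
    refine tendsto_of_tendsto_of_tendsto_of_le_of_le' hlow tendsto_const_nhds ?_ ?_ <;>
      filter_upwards [eventually_gt_atTop 0] with n hn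
    · rw [sub_div' (by positivity), div_le_div_iff_of_pos_right (by positivity)]
      linarith [Int.lt_floor_add_one (q * n)]
    · rw [div_le_iff₀ (by positivity)]
      exact Int.floor_le _
  simpa [add_div] using (tendsto_const_div_atTop_nhds_zero_nat c).add hfloor

lemma tendsto_poch_div_pow {x : ℕ → ℝ} {q : ℝ}
    (hx : Tendsto (fun n => x n / n) atTop (𝓝 q)) (k : ℕ) :
    Tendsto (fun n => poch (x n) k / (n : ℝ) ^ k) atTop (𝓝 (q ^ k)) := by
  have hi : ∀ i : ℕ, Tendsto (fun n : ℕ => (x n + i) / n) atTop (𝓝 q) := fun i => by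
    simpa [add_div] using hx.add (tendsto_const_div_atTop_nhds_zero_nat (i : ℝ))
  simpa [poch, Finset.prod_div_distrib] using tendsto_finsetProd (Finset.range k) fun i _ => hi i

lemma abs_poch_add_div_le {a C m : ℝ} (ha : 0 < a) {n : ℕ} (hn : 1 ≤ n) (hm : |m| ≤ C * n)
    (k : ℕ) : |poch (a + m) k / ((n : ℝ) ^ k * poch a k)| ≤ (1 + C / a) ^ k := by
  have hn' : (1 : ℝ) ≤ n := by exact_mod_cast hn
  have hpa := poch_pos ha k
  have hden : 0 < (n : ℝ) ^ k * poch a k := by positivity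
  rw [abs_div, abs_of_pos hden, div_le_iff₀ hden]
  have hbase : 1 + |m| / a ≤ n * (1 + C / a) :=
    calc 1 + |m| / a ≤ n + C * n / a := by gcongr
      _ = n * (1 + C / a) := by ring
  calc |poch (a + m) k| ≤ (1 + |m| / a) ^ k * poch a k := abs_poch_add_le ha m k
    _ ≤ (n * (1 + C / a)) ^ k * poch a k := by gcongr
    _ = (1 + C / a) ^ k * ((n : ℝ) ^ k * poch a k) := by rw [mul_pow]; ring

lemma tendsto_poch_add_floor_div (a q : ℝ) (k : ℕ) :
    Tendsto (fun n : ℕ => poch (a + ⌊q * n⌋) k / ((n : ℝ) ^ k * poch a k)) atTop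
      (𝓝 (q ^ k / poch a k)) := by
  simpa only [div_div] using
    (tendsto_poch_div_pow (tendsto_add_floor_mul_div a q) k).div_const (poch a k)

namespace MehlerHeine

variable {ι : Type*} [Fintype ι]

noncomputable def scaledCoeff (a q : ι → ℝ) (n k : ℕ) : ℝ :=
  (∏ j, poch (a j + ⌊q j * n⌋) k / ((n : ℝ) ^ k * poch (a j) k)) / k.factorial

lemma tendsto_scaledCoeff (a q : ι → ℝ) (k : ℕ) :
    Tendsto (fun n => scaledCoeff a q n k) atTop
      (𝓝 ((∏ j, q j ^ k / poch (a j) k) / k.factorial)) :=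
  (tendsto_finsetProd _ fun j _ => tendsto_poch_add_floor_div (a j) (q j) k).div_const _

lemma abs_scaledCoeff_le {a : ι → ℝ} (ha : ∀ j, 0 < a j) (q : ι → ℝ) {n : ℕ} (hn : 1 ≤ n)
    (k : ℕ) :
    |scaledCoeff a q n k| ≤ (∏ j, (1 + (|q j| + 1) / a j)) ^ k / k.factorial := by
  rw [scaledCoeff, abs_div, Nat.abs_cast, Finset.abs_prod, ← Finset.prod_pow]
  gcongr with j
  exact abs_poch_add_div_le (ha j) hn (abs_floor_mul_natCast_le (q j) n) k

lemma term_eq_scaledCoeff_mul_pow {r : ℕ} (α q : Fin r → ℝ) (n k : ℕ) (z : ℂ) :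
    (∏ j, (poch (α j + (⌊q j * (n : ℝ)⌋ : ℝ) + 1) k : ℂ)) * (-(z / (n : ℂ) ^ r)) ^ k /
        ((∏ j, (poch (α j + 1) k : ℂ)) * (k.factorial : ℂ)) =
      (scaledCoeff (fun j => α j + 1) q n k : ℂ) * (-1) ^ k * z ^ k := by
  simp only [scaledCoeff, add_right_comm (α _)]
  push_cast
  rw [Finset.prod_div_distrib, Finset.prod_mul_distrib, Finset.prod_const, Finset.card_univ,
    Fintype.card_fin, neg_pow, div_pow, ← pow_mul, ← pow_mul, mul_comm k r]
  ring

lemma limitTerm_eq_mul_pow {r : ℕ} (α q : Fin r → ℝ) (k : ℕ) (z : ℂ) :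
    (-(((∏ j, q j : ℝ) : ℂ)) * z) ^ k / ((∏ j, (poch (α j + 1) k : ℂ)) * (k.factorial : ℂ)) =
      (((∏ j, q j ^ k / poch (α j + 1) k) / k.factorial : ℝ) : ℂ) * (-1) ^ k * z ^ k := by
  push_cast
  rw [Finset.prod_div_distrib, neg_mul, neg_pow, mul_pow, Finset.prod_pow]
  ring

end MehlerHeine

theorem multiple_laguerre_first_kind_mehler_heine_general (r : ℕ)
    (α : Fin r → ℝ) (hα : ∀ j, α j > -1) (q : Fin r → ℝ) :
    ∀ K : Set ℂ, IsCompact K →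
      TendstoUniformlyOn
        (fun (n : ℕ) (z : ℂ) => ∑' k : ℕ,
          (∏ j, (poch (α j + (⌊q j * (n : ℝ)⌋ : ℝ) + 1) k : ℂ)) *
            (-(z / (n : ℂ) ^ r)) ^ k /
            ((∏ j, (poch (α j + 1) k : ℂ)) * (k.factorial : ℂ)))
        (fun z : ℂ => ∑' k : ℕ,
          (-(((∏ j, q j : ℝ) : ℂ)) * z) ^ k /
            ((∏ j, (poch (α j + 1) k : ℂ)) * (k.factorial : ℂ)))
        atTop K := by
  intro K hK
  obtain ⟨R, hKR⟩ := hK.isBounded.subset_closedBall 0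
  have ha : ∀ j, 0 < α j + 1 := fun j => neg_lt_iff_pos_add.mp (hα j)
  set T := ∏ j, (1 + (|q j| + 1) / (α j + 1))
  have hunif := tendstoUniformlyOn_tsum_mul_pow (R := R) (M := fun k => T ^ k / k.factorial)
    (a := fun n k => (MehlerHeine.scaledCoeff (fun j => α j + 1) q n k : ℂ) * (-1) ^ k)
    (fun k => ((Complex.continuous_ofReal.tendsto _).comp
      (MehlerHeine.tendsto_scaledCoeff (fun j => α j + 1) q k)).mul_const _)
    ((eventually_ge_atTop 1).mono fun n hn k => by
      simpa [norm_mul] using MehlerHeine.abs_scaledCoeff_le ha q hn k)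
    (by simpa [div_mul_eq_mul_div, mul_pow] using Real.summable_pow_div_factorial (T * R))
  refine ((hunif.mono hKR).congr ?_).congr_right ?_
  · exact Eventually.of_forall fun n z _ =>
      tsum_congr fun k => (MehlerHeine.term_eq_scaledCoeff_mul_pow α q n k z).symm
  · exact fun z _ => tsum_congr fun k => (MehlerHeine.limitTerm_eq_mul_pow α q k z).symm

/-- Mehler–Heine limit for multiple Laguerre polynomials of the first kind: with
`G_n(x) = ₍r₎F_r(α_1+⌊q_1n⌋+1,…,α_r+⌊q_rn⌋+1; α_1+1,…,α_r+1; -x)`,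
`G_n(z/n^r) → ₀F_r(-; α_1+1,…,α_r+1; -q_1⋯q_r z)` uniformly on compact subsets of `ℂ`. -/
theorem multiple_laguerre_first_kind_mehler_heine (r : ℕ) (hr : 1 ≤ r)
    (α : Fin r → ℝ) (hα : ∀ j, α j > -1) (q : Fin r → ℝ) (hq : ∀ j, q j > 0)
    (hq1 : ∑ j, q j = 1) :
    ∀ K : Set ℂ, IsCompact K →
      TendstoUniformlyOn
        (fun (n : ℕ) (z : ℂ) => ∑' k : ℕ,
          (∏ j, (poch (α j + (⌊q j * (n : ℝ)⌋ : ℝ) + 1) k : ℂ)) *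
            (-(z / (n : ℂ) ^ r)) ^ k /
            ((∏ j, (poch (α j + 1) k : ℂ)) * (k.factorial : ℂ)))
        (fun z : ℂ => ∑' k : ℕ,
          (-(((∏ j, q j : ℝ) : ℂ)) * z) ^ k /
            ((∏ j, (poch (α j + 1) k : ℂ)) * (k.factorial : ℂ)))
        atTop K :=
  multiple_laguerre_first_kind_mehler_heine_general r α hα q
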